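/- For j = 1, 2, …, 8, if α ≥ α_j (where α₁ = 0 and α_{j+1} = α_j + 2j, i.e. the values α_j are 0, 2, 6, 12, 20, 30, 42, 56 for j = 1, …, 8), then for every t > 0 the j-th derivative of f : ℝ → ℝ, defined by f(t) = exp(-α/(1-t)) for t < 1 and f(t) = 0 for t ≥ 1, satisfies (-1)^j f^{(j)}(t) ≥ 0. -/

import Mathlib

/-- The sequence `α₁ = 0`, `α_{j+1} = α_j + 2j`, whose first eight values
(for `j = 1, …, 8`) are `0, 2, 6, 12, 20, 30, 42, 56`. -/
def alphaSeq : ℕ → ℕ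
  | 0 => 0
  | j + 1 => alphaSeq j + 2 * j

/-! For `t < 1` and `u = (1 - t)⁻¹`, induction on `j` gives
`f⁽ʲ⁾(t) = e^{-αu} ∑ₙ (-1)ⁿ L(j, n) αⁿ u^{n+j}`, where `L(j, n)` are the unsigned Lah numbers,
while `f⁽ʲ⁾` vanishes on `[1, ∞)` because `f` is smooth. Hence
`(-1)ʲ f⁽ʲ⁾(t) = e^{-αu} uʲ ∑ₙ (-1)^{j+n} L(j, n) (αu)ⁿ`. The identity
`(j - n) L(j, n) = n (n + 1) L(j, n + 1)` shows that the terms of this alternating sum increase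
with `n` once `αu ≥ j (j - 1) = α_j`, and an alternating sum of increasing nonnegative terms
ending with a positive sign is nonnegative. For `0 < t < 1` we have `αu ≥ α ≥ α_j`.
-/

open Finset Real Set Filter Topology

def lah : ℕ → ℕ → ℕ
  | 0, 0 => 1
  | 0, _ + 1 => 0
  | _ + 1, 0 => 0
  | j + 1, n + 1 => lah j n + (j + n + 1) * lah j (n + 1)

theorem lah_eq_zero_of_lt {j n : ℕ} (h : j < n) : lah j n = 0 := by
  induction j generalizing n with
  | zero => obtain ⟨n, rfl⟩ := Nat.exists_eq_add_of_lt h; simp [lah]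
  | succ j ih =>
    obtain ⟨n, rfl⟩ : ∃ m, n = m + 1 := Nat.exists_eq_succ_of_ne_zero (by omega)
    simp [lah, ih (show j < n by omega), ih (show j < n + 1 by omega)]

theorem sub_mul_lah (j n : ℕ) : ((j : ℤ) - n) * lah j n = (n + 1) * n * lah j (n + 1) := by
  induction j generalizing n with
  | zero => cases n <;> simp [lah]
  | succ j ih =>
    cases n with
    | zero => simp [lah]
    | succ m =>
      have h₀ := ih m
      have h₁ := ih (m + 1)
      simp only [lah]
      push_cast at h₀ h₁ ⊢
      linear_combination h₀ + ((j : ℤ) + m + 2) * h₁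

theorem lah_le_mul_lah_succ {j n : ℕ} (h : n < j) : lah j n ≤ j * (j - 1) * lah j (n + 1) :=
  calc lah j n ≤ (j - n) * lah j n := Nat.le_mul_of_pos_left _ (by omega)
    _ = (n + 1) * n * lah j (n + 1) := by zify [h.le]; exact sub_mul_lah j n
    _ ≤ j * (j - 1) * lah j (n + 1) := by gcongr <;> omega

theorem alternating_sum_nonneg {R : Type*} [Ring R] [PartialOrder R] [IsOrderedAddMonoid R]
    {a : ℕ → R} {j : ℕ} (h0 : 0 ≤ a 0) (ha : ∀ n < j, a n ≤ a (n + 1)) :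
    0 ≤ ∑ n ∈ range (j + 1), (-1) ^ (j + n) * a n := by
  suffices ∀ k ≤ j, 0 ≤ ∑ n ∈ range (k + 1), (-1) ^ (k + n) * a n ∧
      ∑ n ∈ range (k + 1), (-1) ^ (k + n) * a n ≤ a k from (this j le_rfl).1
  intro k hk
  induction k with
  | zero => simpa using h0
  | succ k ih =>
    have hstep : ∑ n ∈ range (k + 2), (-1) ^ (k + 1 + n) * a n =
        a (k + 1) - ∑ n ∈ range (k + 1), (-1) ^ (k + n) * a n := by
      have hsign (n : ℕ) : (-1 : R) ^ (k + 1 + n) = -(-1) ^ (k + n) := by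
        rw [add_right_comm, pow_succ, mul_neg_one]
      rw [sum_range_succ, Even.neg_one_pow ⟨k + 1, rfl⟩, one_mul]
      simp only [hsign, neg_mul, sum_neg_distrib]
      abel
    obtain ⟨ih0, ih1⟩ := ih (by omega)
    rw [hstep]
    exact ⟨sub_nonneg.2 (ih1.trans (ha k (by omega))), sub_le_self _ ih0⟩

noncomputable def lahSum (α : ℝ) (j : ℕ) (u : ℝ) : ℝ :=
  ∑ n ∈ range (j + 1), (-1) ^ n * lah j n * α ^ n * u ^ (n + j)

theorem lahSum_succ (α : ℝ) (j : ℕ) (u : ℝ) :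
    lahSum α (j + 1) u = ∑ n ∈ range (j + 1),
      (-1) ^ n * lah j n * α ^ n * ((n + j) * u ^ (n + j + 1) - α * u ^ (n + j + 2)) := by
  set g : ℕ → ℝ := fun n => (-1) ^ n * lah j n * α ^ n * ((n + j) * u ^ (n + j + 1)) with hg
  have hshift : ∑ n ∈ range (j + 1), g n = ∑ n ∈ range (j + 1), g (n + 1) := by
    have h0 : g 0 = 0 := by rcases j with _ | j <;> simp [hg, lah]
    have hlast : g (j + 1) = 0 := by simp [hg, lah_eq_zero_of_lt (Nat.lt_succ_self j)]
    rw [← add_zero (∑ n ∈ range (j + 1), g n), ← hlast, ← sum_range_succ, sum_range_succ', h0,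
      add_zero]
  simp only [mul_sub, sum_sub_distrib]
  rw [hshift, lahSum, sum_range_succ', eq_sub_iff_add_eq]
  simp only [lah, Nat.cast_zero, mul_zero, zero_mul, add_zero, ← sum_add_distrib]
  refine sum_congr rfl fun n _ => ?_
  simp only [hg]
  push_cast
  ring

theorem hasDerivAt_inv_one_sub_pow {t : ℝ} (ht : t ≠ 1) (k : ℕ) :
    HasDerivAt (fun s => (1 - s)⁻¹ ^ k) (k * (1 - t)⁻¹ ^ (k + 1)) t := by
  have h1t : 1 - t ≠ 0 := sub_ne_zero.2 ht.symm
  have hinv : HasDerivAt (fun s => (1 - s)⁻¹) ((1 - t)⁻¹ ^ 2) t := by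
    refine (((hasDerivAt_id t).const_sub 1).inv h1t).congr_deriv ?_
    simp
  refine (hinv.fun_pow k).congr_deriv ?_
  rcases k with _ | k
  · simp
  · push_cast; ring

theorem hasDerivAt_exp_mul_lahSum (α : ℝ) (j : ℕ) {t : ℝ} (ht : t ≠ 1) :
    HasDerivAt (fun s => exp (-α / (1 - s)) * lahSum α j (1 - s)⁻¹)
      (exp (-α / (1 - t)) * lahSum α (j + 1) (1 - t)⁻¹) t := by
  have hexp : HasDerivAt (fun s => exp (-α / (1 - s)))
      (exp (-α / (1 - t)) * (-α * (1 - t)⁻¹ ^ 2)) t := by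
    simpa [div_eq_mul_inv] using ((hasDerivAt_inv_one_sub_pow ht 1).const_mul (-α)).exp
  have hsum : HasDerivAt (fun s => lahSum α j (1 - s)⁻¹) (∑ n ∈ range (j + 1),
      (-1) ^ n * lah j n * α ^ n * ((n + j : ℕ) * (1 - t)⁻¹ ^ (n + j + 1))) t :=
    HasDerivAt.fun_sum fun n _ => (hasDerivAt_inv_one_sub_pow ht (n + j)).const_mul _
  refine (hexp.mul hsum).congr_deriv ?_
  rw [lahSum_succ, lahSum, mul_sum, mul_sum, mul_sum, ← sum_add_distrib]
  refine sum_congr rfl fun n _ => ?_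
  push_cast
  ring

theorem neg_one_pow_mul_lahSum_nonneg {α u : ℝ} {j : ℕ} (hu : 0 ≤ u)
    (hαu : ((j * (j - 1) : ℕ) : ℝ) ≤ α * u) : 0 ≤ (-1) ^ j * lahSum α j u := by
  have hy : 0 ≤ α * u := (Nat.cast_nonneg _).trans hαu
  have hrw : (-1) ^ j * lahSum α j u =
      u ^ j * ∑ n ∈ range (j + 1), (-1) ^ (j + n) * (lah j n * (α * u) ^ n) := by
    rw [lahSum, mul_sum, mul_sum]
    refine sum_congr rfl fun n _ => ?_
    ring
  rw [hrw]
  refine mul_nonneg (pow_nonneg hu j) (alternating_sum_nonneg (by positivity) fun n hn => ?_)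
  have hlah : (lah j n : ℝ) ≤ (j * (j - 1) : ℕ) * lah j (n + 1) := by
    exact_mod_cast lah_le_mul_lah_succ hn
  calc (lah j n : ℝ) * (α * u) ^ n
      ≤ (j * (j - 1) : ℕ) * lah j (n + 1) * (α * u) ^ n := by gcongr
    _ ≤ α * u * lah j (n + 1) * (α * u) ^ n := by gcongr
    _ = lah j (n + 1) * (α * u) ^ (n + 1) := by ring

noncomputable def bump (α s : ℝ) : ℝ := if s < 1 then exp (-α / (1 - s)) else 0

theorem iteratedDeriv_bump_of_lt (α : ℝ) (j : ℕ) {t : ℝ} (ht : t < 1) :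
    iteratedDeriv j (bump α) t = exp (-α / (1 - t)) * lahSum α j (1 - t)⁻¹ := by
  induction j generalizing t with
  | zero => simp [bump, ht, lahSum, lah]
  | succ j ih =>
    have hev : iteratedDeriv j (bump α) =ᶠ[𝓝 t]
        fun s => exp (-α / (1 - s)) * lahSum α j (1 - s)⁻¹ :=
      eventually_of_mem (Iio_mem_nhds ht) fun s hs => ih hs
    rw [iteratedDeriv_succ, hev.deriv_eq, (hasDerivAt_exp_mul_lahSum α j ht.ne).deriv]

theorem contDiff_bump {α : ℝ} (hα : 0 < α) {n : ℕ∞} : ContDiff ℝ n (bump α) := by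
  have hglue : bump α = fun s => expNegInvGlue ((1 - s) / α) := by
    funext s
    by_cases hs : s < 1
    · have hpos : 0 < (1 - s) / α := div_pos (by linarith) hα
      rw [bump, expNegInvGlue, if_neg hpos.not_ge, if_pos hs, inv_div, neg_div]
    · have hnonpos : (1 - s) / α ≤ 0 := div_nonpos_of_nonpos_of_nonneg (by linarith) hα.le
      rw [bump, expNegInvGlue, if_pos hnonpos, if_neg hs]
  rw [hglue]
  exact expNegInvGlue.contDiff.comp ((contDiff_const.sub contDiff_id).div_const α)

theorem iteratedDeriv_bump_of_one_le {α : ℝ} (hα : 0 < α) (j : ℕ) {t : ℝ} (ht : 1 ≤ t) :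
    iteratedDeriv j (bump α) t = 0 := by
  have hzero : EqOn (iteratedDeriv j (bump α)) 0 (Ioi 1) := fun s hs => by
    have hev : bump α =ᶠ[𝓝 s] fun _ => 0 :=
      eventually_of_mem (Ioi_mem_nhds hs) fun r hr => if_neg hr.le.not_gt
    simp [hev.iteratedDeriv_eq]
  refine hzero.closure ((contDiff_bump hα).continuous_iteratedDeriv' j) continuous_const ?_
  rwa [closure_Ioi]

theorem alphaSeq_eq (j : ℕ) : alphaSeq j = j * (j - 1) := by
  induction j with
  | zero => rfl
  | succ j ih =>
    rw [alphaSeq, ih]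
    rcases j with _ | j
    · rfl
    · simp only [Nat.add_sub_cancel]; ring

theorem bump_completely_monotone_up_to_eight_general
    (j : ℕ) (α : ℝ) (hα : 0 < α)
    (hαj : (alphaSeq j : ℝ) ≤ α) :
    ∀ t : ℝ, 0 < t →
      0 ≤ (-1 : ℝ) ^ j *
        iteratedDeriv j (fun s : ℝ => if s < 1 then Real.exp (-α / (1 - s)) else 0) t := by
  intro t ht
  change 0 ≤ (-1) ^ j * iteratedDeriv j (bump α) t
  rcases lt_or_ge t 1 with h1 | h1
  · have hu : 1 ≤ (1 - t)⁻¹ := one_le_inv₀ (by linarith) |>.2 (by linarith)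
    have hαu : ((j * (j - 1) : ℕ) : ℝ) ≤ α * (1 - t)⁻¹ :=
      calc ((j * (j - 1) : ℕ) : ℝ) = alphaSeq j := by rw [alphaSeq_eq]
        _ ≤ α := hαj
        _ ≤ α * (1 - t)⁻¹ := le_mul_of_one_le_right hα.le hu
    rw [iteratedDeriv_bump_of_lt α j h1, mul_left_comm]
    exact mul_nonneg (exp_pos _).le (neg_one_pow_mul_lahSum_nonneg (by linarith) hαu)
  · rw [iteratedDeriv_bump_of_one_le hα j h1, mul_zero]

/-- For `j = 1, …, 8`, if `α ≥ α_j`, then for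
`f(t) = exp(-α/(1-t))` for `t < 1`, `f(t) = 0` for `t ≥ 1`,
we have `(-1)^j f⁽ʲ⁾(t) ≥ 0` for every `t > 0`. -/
theorem bump_completely_monotone_up_to_eight
    (j : ℕ) (hj1 : 1 ≤ j) (hj8 : j ≤ 8) (α : ℝ) (hα : 0 < α)
    (hαj : (alphaSeq j : ℝ) ≤ α) :
    ∀ t : ℝ, 0 < t →
      0 ≤ (-1 : ℝ) ^ j *
        iteratedDeriv j (fun s : ℝ => if s < 1 then Real.exp (-α / (1 - s)) else 0) t :=
  bump_completely_monotone_up_to_eight_general j α hα hαj
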